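/- Let Φ : [m,n] → ℝ be an increasing C¹ function with Φ'(ℓ) ≠ 0 for all ℓ, and let μ > 0. Then for every ℓ ∈ [m,n], (I^{μ;Φ}_{m⁺} [M_μ((Φ(·)−Φ(m))^μ)])(ℓ) ≤ M_μ((Φ(ℓ)−Φ(m))^μ). -/

import Mathlib

open intervalIntegral

/-- One-parameter Mittag-Leffler function. -/
noncomputable def mittagLeffler (p x : ℝ) : ℝ :=
  ∑' k : ℕ, x ^ k / Real.Gamma (p * k + 1)

/-- Φ-Riemann–Liouville fractional integral of order μ with base point m. -/
noncomputable def phiFracInt (Φ : ℝ → ℝ) (m μ : ℝ) (z : ℝ → ℝ) (ℓ : ℝ) : ℝ :=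
  (1 / Real.Gamma μ) * ∫ η in m..ℓ, deriv Φ η * (Φ ℓ - Φ η) ^ (μ - 1) * z η

/-!
Expanding the Mittag-Leffler function into its power series, the substitution `u = Φ η` turns
the Φ-fractional integral into the classical Riemann–Liouville integral of order `μ` over
`[Φ m, Φ ℓ]`. Termwise this is a Beta integral,
`∫_a^b (b - u)^(μ-1) (u - a)^(μk) / Γ(μk+1) du = Γ(μ) (b - a)^(μ(k+1)) / Γ(μ(k+1)+1)`,
so the Φ-fractional integral of `M_μ((Φ - Φ m)^μ)` at `ℓ` is exactly `M_μ((Φ ℓ - Φ m)^μ) - 1`.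
All terms are nonnegative and the series converges, because `Γ(s) ≥ R^(s-1) e^(-R)`, so
summation and integration commute.
-/

open Real Set MeasureTheory

lemma Real.rpow_mul_exp_neg_le_Gamma {s R : ℝ} (hs : 1 ≤ s) (hR : 0 ≤ R) :
    R ^ (s - 1) * exp (-R) ≤ Gamma s := by
  have hint := GammaIntegral_convergent (by linarith : 0 < s)
  calc R ^ (s - 1) * exp (-R) = ∫ x in Ioi R, R ^ (s - 1) * exp (-x) := by
        rw [MeasureTheory.integral_const_mul, integral_exp_neg_Ioi]
    _ ≤ ∫ x in Ioi R, exp (-x) * x ^ (s - 1) := by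
        refine setIntegral_mono_on ((integrableOn_exp_neg_Ioi R).const_mul _)
          (hint.mono_set (Ioi_subset_Ioi hR)) measurableSet_Ioi fun x hx => ?_
        rw [mul_comm]
        gcongr
        exact le_of_lt hx
    _ ≤ ∫ x in Ioi 0, exp (-x) * x ^ (s - 1) :=
        setIntegral_mono_set hint
          (ae_restrict_of_forall_mem measurableSet_Ioi fun x hx => by
            have : (0 : ℝ) < x := hx
            positivity)
          (Ioi_subset_Ioi hR).eventuallyLE
    _ = Gamma s := (Gamma_eq_integral (by linarith)).symm

lemma summable_pow_div_Gamma_mul_add_one {μ : ℝ} (hμ : 0 < μ) (x : ℝ) :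
    Summable fun k : ℕ => x ^ k / Gamma (μ * k + 1) := by
  set c := 2 * |x| + 1
  have hc : 0 < c := by positivity
  refine Summable.of_norm_bounded ((summable_geometric_of_lt_one (r := |x| / c) (by positivity)
    ((div_lt_one hc).2 (by linarith [abs_nonneg x]))).mul_left (exp (c ^ μ⁻¹))) fun k => ?_
  have hΓ : 0 < Gamma (μ * k + 1) := Gamma_pos_of_pos (by positivity)
  -- `Γ(μk + 1) ≥ R^(μk) e^(-R) = c^k e^(-R)` for `R = c^(1/μ)`
  have hbound := rpow_mul_exp_neg_le_Gamma (s := μ * k + 1) (R := c ^ μ⁻¹)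
    (by linarith [show 0 ≤ μ * k by positivity]) (by positivity)
  rw [add_sub_cancel_right, ← rpow_mul hc.le, inv_mul_cancel_left₀ hμ.ne', rpow_natCast]
    at hbound
  rw [norm_div, norm_pow, norm_of_nonneg hΓ.le, Real.norm_eq_abs, div_le_iff₀ hΓ]
  calc |x| ^ k = exp (c ^ μ⁻¹) * (|x| / c) ^ k * (c ^ k * exp (-c ^ μ⁻¹)) := by
        rw [div_pow, exp_neg]
        field_simp
    _ ≤ exp (c ^ μ⁻¹) * (|x| / c) ^ k * Gamma (μ * k + 1) := by gcongr

lemma mittagLeffler_eq_one_add_tsum {μ : ℝ} (hμ : 0 < μ) (x : ℝ) :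
    mittagLeffler μ x = 1 + ∑' k : ℕ, x ^ (k + 1) / Gamma (μ * (k + 1 : ℕ) + 1) := by
  rw [mittagLeffler, (summable_pow_div_Gamma_mul_add_one hμ x).tsum_eq_zero_add]
  simp

lemma integrableOn_and_integral_rpow_mul_one_sub_rpow {p q : ℝ} (hp : 0 < p) (hq : 0 < q) :
    IntegrableOn (fun t : ℝ => t ^ (p - 1) * (1 - t) ^ (q - 1)) (Ioo 0 1) ∧
      ∫ t in Ioo 0 1, t ^ (p - 1) * (1 - t) ^ (q - 1) = ProbabilityTheory.beta p q := by
  set B := ProbabilityTheory.beta p q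
  have hB : 0 < B := ProbabilityTheory.beta_pos hp hq
  have hlint : ∫⁻ t in Ioo 0 1, ENNReal.ofReal (B⁻¹ * (t ^ (p - 1) * (1 - t) ^ (q - 1))) = 1 := by
    simpa [ProbabilityTheory.lintegral_betaPDF, mul_assoc] using
      ProbabilityTheory.lintegral_betaPDF_eq_one hp hq
  have hnonneg : 0 ≤ᵐ[volume.restrict (Ioo 0 1)]
      fun t : ℝ => B⁻¹ * (t ^ (p - 1) * (1 - t) ^ (q - 1)) :=
    ae_restrict_of_forall_mem measurableSet_Ioo fun t ht => by
      have := sub_pos.2 ht.2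
      have := ht.1
      positivity
  have hmeas : AEStronglyMeasurable (fun t : ℝ => B⁻¹ * (t ^ (p - 1) * (1 - t) ^ (q - 1)))
      (volume.restrict (Ioo 0 1)) := by fun_prop
  have hint : IntegrableOn (fun t : ℝ => B⁻¹ * (t ^ (p - 1) * (1 - t) ^ (q - 1))) (Ioo 0 1) :=
    ⟨hmeas, (hasFiniteIntegral_iff_ofReal hnonneg).2 (by simp [hlint])⟩
  have hval := integral_eq_lintegral_of_nonneg_ae hnonneg hmeas
  rw [hlint, ENNReal.toReal_one, MeasureTheory.integral_const_mul] at hval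
  refine ⟨by simpa [IntegrableOn, hB.ne'] using hint.const_mul B, ?_⟩
  field_simp at hval
  linarith

section ChangeOfVariables

variable {Φ g : ℝ → ℝ} {m ℓ : ℝ}

lemma MonotoneOn.deriv_nonneg_of_isOpen {s : Set ℝ} (hs : IsOpen s) (hmono : MonotoneOn Φ s)
    {η : ℝ} (hη : η ∈ s) : 0 ≤ deriv Φ η := by
  rw [← derivWithin_of_isOpen hs hη]
  exact hmono.derivWithin_nonneg

lemma integrableOn_deriv_mul_comp_Ioo_iff (hmℓ : m ≤ ℓ) (hmono : StrictMonoOn Φ (Icc m ℓ))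
    (hcont : ContinuousOn Φ (Icc m ℓ)) (hdiff : DifferentiableOn ℝ Φ (Ioo m ℓ)) :
    IntegrableOn (fun η => deriv Φ η * g (Φ η)) (Ioo m ℓ) ↔
      IntegrableOn g (Ioo (Φ m) (Φ ℓ)) := by
  rw [← hcont.image_Ioo_of_strictMonoOn hmℓ hmono,
    integrableOn_image_iff_integrableOn_abs_deriv_smul measurableSet_Ioo
      (fun η hη => (hdiff.differentiableAt (isOpen_Ioo.mem_nhds hη)).hasDerivAt.hasDerivWithinAt)
      (hmono.injOn.mono Ioo_subset_Icc_self)]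
  refine integrableOn_congr_fun (fun η hη => ?_) measurableSet_Ioo
  rw [smul_eq_mul, abs_of_nonneg
    ((hmono.monotoneOn.mono Ioo_subset_Icc_self).deriv_nonneg_of_isOpen isOpen_Ioo hη)]

lemma setIntegral_deriv_mul_comp_Ioo (hmℓ : m ≤ ℓ) (hmono : StrictMonoOn Φ (Icc m ℓ))
    (hcont : ContinuousOn Φ (Icc m ℓ)) (hdiff : DifferentiableOn ℝ Φ (Ioo m ℓ)) :
    ∫ η in Ioo m ℓ, deriv Φ η * g (Φ η) = ∫ u in Ioo (Φ m) (Φ ℓ), g u := by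
  rw [← hcont.image_Ioo_of_strictMonoOn hmℓ hmono,
    integral_image_eq_integral_abs_deriv_smul measurableSet_Ioo
      (fun η hη => (hdiff.differentiableAt (isOpen_Ioo.mem_nhds hη)).hasDerivAt.hasDerivWithinAt)
      (hmono.injOn.mono Ioo_subset_Icc_self)]
  refine setIntegral_congr_fun measurableSet_Ioo fun η hη => ?_
  rw [smul_eq_mul, abs_of_nonneg
    ((hmono.monotoneOn.mono Ioo_subset_Icc_self).deriv_nonneg_of_isOpen isOpen_Ioo hη)]

end ChangeOfVariables

lemma integrableOn_and_integral_sub_rpow_mul_sub_rpow {a b p q : ℝ} (hab : a < b) (hp : 0 < p)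
    (hq : 0 < q) :
    IntegrableOn (fun u : ℝ => (u - a) ^ (p - 1) * (b - u) ^ (q - 1)) (Ioo a b) ∧
      ∫ u in Ioo a b, (u - a) ^ (p - 1) * (b - u) ^ (q - 1) =
        ProbabilityTheory.beta p q * (b - a) ^ (p + q - 1) := by
  set φ : ℝ → ℝ := fun t => a + (b - a) * t
  have hba : 0 < b - a := sub_pos.2 hab
  have hφ' (t : ℝ) : HasDerivAt φ (b - a) t := by
    simpa only [mul_one] using ((hasDerivAt_id' t).const_mul (b - a)).const_add a
  have hφ : StrictMonoOn φ (Icc 0 1) := fun s _ t _ hst => by simp only [φ]; nlinarith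
  have hφc : ContinuousOn φ (Icc 0 1) := by fun_prop
  have hφd : DifferentiableOn ℝ φ (Ioo 0 1) := fun t _ =>
    (hφ' t).differentiableAt.differentiableWithinAt
  have hφ0 : φ 0 = a := by simp [φ]
  have hφ1 : φ 1 = b := by simp [φ]
  have hsubst : EqOn (fun t => deriv φ t * ((φ t - a) ^ (p - 1) * (b - φ t) ^ (q - 1)))
      (fun t => (b - a) ^ (p + q - 1) * (t ^ (p - 1) * (1 - t) ^ (q - 1))) (Ioo 0 1) := by
    intro t ht
    dsimp only
    rw [(hφ' t).deriv, show φ t - a = (b - a) * t by simp only [φ]; ring,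
      show b - φ t = (b - a) * (1 - t) by simp only [φ]; ring,
      mul_rpow hba.le ht.1.le, mul_rpow hba.le (sub_pos.2 ht.2).le,
      show p + q - 1 = 1 + (p - 1) + (q - 1) by ring, rpow_add hba, rpow_add hba, rpow_one]
    ring
  obtain ⟨hint, hval⟩ := integrableOn_and_integral_rpow_mul_one_sub_rpow hp hq
  have hint_iff := integrableOn_deriv_mul_comp_Ioo_iff
    (g := fun u => (u - a) ^ (p - 1) * (b - u) ^ (q - 1)) zero_le_one hφ hφc hφd
  have hchange := setIntegral_deriv_mul_comp_Ioo
    (g := fun u => (u - a) ^ (p - 1) * (b - u) ^ (q - 1)) zero_le_one hφ hφc hφd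
  rw [hφ0, hφ1] at hint_iff hchange
  refine ⟨hint_iff.1 <| IntegrableOn.congr_fun (hint.const_mul _) hsubst.symm measurableSet_Ioo,
    ?_⟩
  rw [← hchange, setIntegral_congr_fun measurableSet_Ioo hsubst,
    MeasureTheory.integral_const_mul, hval, mul_comm]

lemma setIntegral_sub_rpow_mul_mittagLeffler {a b μ : ℝ} (hμ : 0 < μ) (hab : a ≤ b) :
    ∫ u in Ioo a b, (b - u) ^ (μ - 1) * mittagLeffler μ ((u - a) ^ μ) =
      Gamma μ * (mittagLeffler μ ((b - a) ^ μ) - 1) := by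
  rcases hab.eq_or_lt with rfl | hab
  · simp [mittagLeffler_eq_one_add_tsum hμ, zero_rpow hμ.ne']
  set f : ℕ → ℝ → ℝ := fun k u => (b - u) ^ (μ - 1) * (((u - a) ^ μ) ^ k / Gamma (μ * k + 1))
  have hf : ∀ k : ℕ, EqOn (f k)
      (fun u => (Gamma (μ * k + 1))⁻¹ * ((u - a) ^ (μ * k + 1 - 1) * (b - u) ^ (μ - 1)))
      (Ioo a b) := by
    intro k u hu
    simp only [f]
    rw [add_sub_cancel_right, rpow_mul (sub_pos.2 hu.1).le, rpow_natCast]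
    ring
  have hbeta (k : ℕ) :=
    integrableOn_and_integral_sub_rpow_mul_sub_rpow hab (p := μ * k + 1) (by positivity) hμ
  have hint (k : ℕ) : IntegrableOn (f k) (Ioo a b) :=
    IntegrableOn.congr_fun ((hbeta k).1.const_mul _) (hf k).symm measurableSet_Ioo
  have hval (k : ℕ) : ∫ u in Ioo a b, f k u =
      Gamma μ * (((b - a) ^ μ) ^ (k + 1) / Gamma (μ * (k + 1 : ℕ) + 1)) := by
    rw [setIntegral_congr_fun measurableSet_Ioo (hf k), MeasureTheory.integral_const_mul,
      (hbeta k).2, ProbabilityTheory.beta, ← rpow_natCast, ← rpow_mul (sub_pos.2 hab).le,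
      show μ * k + 1 + μ = μ * (k + 1 : ℕ) + 1 by push_cast; ring,
      show μ * (k + 1 : ℕ) + 1 - 1 = μ * (k + 1 : ℕ) by ring, mul_comm μ]
    field_simp
  have hnorm (k : ℕ) : ∫ u in Ioo a b, ‖f k u‖ = ∫ u in Ioo a b, f k u :=
    setIntegral_congr_fun measurableSet_Ioo fun u hu => norm_of_nonneg <| by
      rw [hf k hu]
      have := sub_pos.2 hu.1
      have := sub_pos.2 hu.2
      have := Gamma_pos_of_pos (show 0 < μ * k + 1 by positivity)
      positivity
  have hsum : Summable fun k : ℕ => ∫ u in Ioo a b, ‖f k u‖ := by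
    simp_rw [hnorm, hval]
    exact ((summable_nat_add_iff 1).2 (summable_pow_div_Gamma_mul_add_one hμ _)).mul_left _
  calc ∫ u in Ioo a b, (b - u) ^ (μ - 1) * mittagLeffler μ ((u - a) ^ μ)
      = ∫ u in Ioo a b, ∑' k, f k u := by simp only [f, mittagLeffler, tsum_mul_left]
    _ = ∑' k, ∫ u in Ioo a b, f k u := (integral_tsum_of_summable_integral_norm hint hsum).symm
    _ = Gamma μ * (mittagLeffler μ ((b - a) ^ μ) - 1) := by
      rw [mittagLeffler_eq_one_add_tsum hμ, add_sub_cancel_left, ← tsum_mul_left]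
      exact tsum_congr hval

theorem phiFracInt_mittagLeffler_eq {Φ : ℝ → ℝ} {m μ ℓ : ℝ} (hμ : 0 < μ) (hmℓ : m ≤ ℓ)
    (hmono : StrictMonoOn Φ (Icc m ℓ)) (hcont : ContinuousOn Φ (Icc m ℓ))
    (hdiff : DifferentiableOn ℝ Φ (Ioo m ℓ)) :
    phiFracInt Φ m μ (fun t => mittagLeffler μ ((Φ t - Φ m) ^ μ)) ℓ =
      mittagLeffler μ ((Φ ℓ - Φ m) ^ μ) - 1 := by
  have hΦ : Φ m ≤ Φ ℓ := hmono.monotoneOn (left_mem_Icc.2 hmℓ) (right_mem_Icc.2 hmℓ) hmℓ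
  rw [phiFracInt, intervalIntegral.integral_of_le hmℓ, integral_Ioc_eq_integral_Ioo]
  simp_rw [mul_assoc (deriv Φ _)]
  rw [setIntegral_deriv_mul_comp_Ioo (g := fun u => (Φ ℓ - u) ^ (μ - 1) *
      mittagLeffler μ ((u - Φ m) ^ μ)) hmℓ hmono hcont hdiff,
    setIntegral_sub_rpow_mul_mittagLeffler hμ hΦ]
  field_simp [(Gamma_pos_of_pos hμ).ne']

theorem phiFracInt_mittagLeffler_le_general (Φ : ℝ → ℝ) (m n μ : ℝ)
    (hΦmono : StrictMonoOn Φ (Set.Icc m n))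
    (hΦC1 : ContDiffOn ℝ 1 Φ (Set.Icc m n))
    (hμ : 0 < μ) (ℓ : ℝ) (hℓ : ℓ ∈ Set.Icc m n) :
    phiFracInt Φ m μ (fun t => mittagLeffler μ ((Φ t - Φ m) ^ μ)) ℓ ≤
      mittagLeffler μ ((Φ ℓ - Φ m) ^ μ) := by
  have hsub : Icc m ℓ ⊆ Icc m n := Icc_subset_Icc_right hℓ.2
  rw [phiFracInt_mittagLeffler_eq hμ hℓ.1 (hΦmono.mono hsub) (hΦC1.continuousOn.mono hsub)
    ((hΦC1.differentiableOn one_ne_zero).mono (Ioo_subset_Icc_self.trans hsub))]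
  linarith

theorem phiFracInt_mittagLeffler_le (Φ : ℝ → ℝ) (m n μ : ℝ) (hmn : m < n)
    (hΦmono : StrictMonoOn Φ (Set.Icc m n))
    (hΦC1 : ContDiffOn ℝ 1 Φ (Set.Icc m n))
    (hΦ' : ∀ ℓ ∈ Set.Icc m n, deriv Φ ℓ ≠ 0)
    (hμ : 0 < μ) (ℓ : ℝ) (hℓ : ℓ ∈ Set.Icc m n) :
    phiFracInt Φ m μ (fun t => mittagLeffler μ ((Φ t - Φ m) ^ μ)) ℓ ≤
      mittagLeffler μ ((Φ ℓ - Φ m) ^ μ) :=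
  phiFracInt_mittagLeffler_le_general Φ m n μ hΦmono hΦC1 hμ ℓ hℓ
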